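/- arXiv:1601.03240 — 2 statements merged into one kernel-verified Lean document; each statement's English description precedes it below -/
import Mathlib

section
/- Let φ(V) be a free prenex pp-formula and let φ̂(V) be obtained from φ by deleting all atoms occurring in components without liberal variables. Then for every finite structure B, either φ(B) = ∅ or φ(B) = φ̂(B). -/
/-!
Every relation tuple of `A` lies inside a single component of its graph. Hence, once `φ` has
some solution `g`, any solution `k` of `φ̂` extends to a solution of `φ`: keep `k` on the
components meeting `S` and use `g` on all the others.
-/

structure Signature where
  symb : Type
  ar : symb → ℕ

structure Struc (σ : Signature) where
  carrier : Type
  rel : ∀ r : σ.symb, (Fin (σ.ar r) → carrier) → Prop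

def IsHom {σ : Signature} (A B : Struc σ) (h : A.carrier → B.carrier) : Prop :=
  ∀ r t, A.rel r t → B.rel r (h ∘ t)

def ppSet {σ : Signature} (A : Struc σ) (S : Set A.carrier) (B : Struc σ) :
    Set (S → B.carrier) :=
  {f | ∃ h : A.carrier → B.carrier, IsHom A B h ∧ ∀ s : S, h s = f s}

noncomputable def ppCount {σ : Signature} (A : Struc σ) (S : Set A.carrier)
    (B : Struc σ) : ℕ :=
  Nat.card (ppSet A S B)

def CountEquiv {σ : Signature} (A₁ : Struc σ) (S₁ : Set A₁.carrier)
    (A₂ : Struc σ) (S₂ : Set A₂.carrier) : Prop :=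
  ∀ B : Struc σ, Finite B.carrier → ppCount A₁ S₁ B = ppCount A₂ S₂ B

def SemiCountEquiv {σ : Signature} (A₁ : Struc σ) (S₁ : Set A₁.carrier)
    (A₂ : Struc σ) (S₂ : Set A₂.carrier) : Prop :=
  ∀ B : Struc σ, Finite B.carrier → 0 < ppCount A₁ S₁ B → 0 < ppCount A₂ S₂ B →
    ppCount A₁ S₁ B = ppCount A₂ S₂ B

def ppGraph {σ : Signature} (A : Struc σ) : SimpleGraph A.carrier where
  Adj x y := x ≠ y ∧ ∃ r t, A.rel r t ∧ (∃ i, t i = x) ∧ (∃ j, t j = y)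
  symm := by
    constructor
    rintro x y ⟨hxy, r, t, h, hi, hj⟩
    exact ⟨Ne.symm hxy, r, t, h, hj, hi⟩
  loopless := by constructor; rintro x ⟨h, -⟩; exact h rfl

def hatStruc {σ : Signature} (A : Struc σ) (S : Set A.carrier) : Struc σ :=
  ⟨A.carrier, fun r t => A.rel r t ∧ ∃ i, ∃ s ∈ S, (ppGraph A).Reachable (t i) s⟩

def compStruc {σ : Signature} (A : Struc σ) (c : (ppGraph A).ConnectedComponent) :
    Struc σ :=
  ⟨{a : A.carrier // (ppGraph A).connectedComponentMk a = c},
   fun r t => A.rel r (fun i => (t i).1)⟩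

def prodStruc {σ : Signature} (B C : Struc σ) : Struc σ :=
  ⟨B.carrier × C.carrier,
   fun r t => B.rel r (fun i => (t i).1) ∧ C.rel r (fun i => (t i).2)⟩

section

variable {σ : Signature}

def liberalPart (A : Struc σ) (S : Set A.carrier) : Set A.carrier :=
  {a | ∃ s ∈ S, (ppGraph A).Reachable a s}

variable {A B : Struc σ} {S : Set A.carrier}

lemma subset_liberalPart : S ⊆ liberalPart A S :=
  fun s hs => ⟨s, hs, .rfl⟩

lemma ppGraph_reachable_of_rel {r : σ.symb} {t : Fin (σ.ar r) → A.carrier} (ht : A.rel r t)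
    (i j : Fin (σ.ar r)) : (ppGraph A).Reachable (t i) (t j) := by
  by_cases h : t i = t j
  · rw [h]
  · exact SimpleGraph.Adj.reachable ⟨h, r, t, ht, ⟨i, rfl⟩, ⟨j, rfl⟩⟩

lemma mem_liberalPart_of_rel {r : σ.symb} {t : Fin (σ.ar r) → A.carrier} (ht : A.rel r t)
    (h : ∃ i, t i ∈ liberalPart A S) (j : Fin (σ.ar r)) : t j ∈ liberalPart A S := by
  obtain ⟨i, s, hs, hreach⟩ := h
  exact ⟨s, hs, (ppGraph_reachable_of_rel ht j i).trans hreach⟩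

lemma IsHom.toHatStruc {h : A.carrier → B.carrier} (hh : IsHom A B h) :
    IsHom (hatStruc A S) B h :=
  fun r t ht => hh r t ht.1

lemma IsHom.piecewise_liberalPart [DecidablePred (· ∈ liberalPart A S)]
    {k g : A.carrier → B.carrier} (hk : IsHom (hatStruc A S) B k) (hg : IsHom A B g) :
    IsHom A B ((liberalPart A S).piecewise k g) := by
  intro r t ht
  by_cases hlib : ∃ i, t i ∈ liberalPart A S
  · have hcomp : (liberalPart A S).piecewise k g ∘ t = k ∘ t :=
      funext fun j => Set.piecewise_eq_of_mem _ _ _ (mem_liberalPart_of_rel ht hlib j)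
    exact hcomp ▸ hk r t ⟨ht, hlib⟩
  · simp only [not_exists] at hlib
    have hcomp : (liberalPart A S).piecewise k g ∘ t = g ∘ t :=
      funext fun j => Set.piecewise_eq_of_notMem _ _ _ (hlib j)
    exact hcomp ▸ hg r t ht

lemma ppSet_subset_ppSet_hatStruc : ppSet A S B ⊆ ppSet (hatStruc A S) S B :=
  fun _ ⟨h, hh, hS⟩ => ⟨h, hh.toHatStruc, hS⟩

lemma ppSet_hatStruc_subset_ppSet {g : A.carrier → B.carrier} (hg : IsHom A B g) :
    ppSet (hatStruc A S) S B ⊆ ppSet A S B := by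
  classical
  rintro f ⟨k, hk, hkS⟩
  exact ⟨_, IsHom.piecewise_liberalPart hk hg,
    fun s => (Set.piecewise_eq_of_mem _ k g (subset_liberalPart (A := A) s.2)).trans (hkS s)⟩

end

theorem stmt10_general (σ : Signature) (A : Struc σ) (S : Set A.carrier)
    (B : Struc σ) :
    ppSet A S B = ∅ ∨ ppSet A S B = ppSet (hatStruc A S) S B := by
  rcases (ppSet A S B).eq_empty_or_nonempty with hempty | ⟨_, g, hg, -⟩
  · exact Or.inl hempty
  · exact Or.inr (ppSet_subset_ppSet_hatStruc.antisymm (ppSet_hatStruc_subset_ppSet hg))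

/-- For a free prenex pp-formula `φ = (A, S)` and `φ̂` obtained by deleting the
non-liberal components, on every finite structure `B` either `φ(B)` is empty
or `φ(B) = φ̂(B)`. -/
theorem stmt10 (σ : Signature) (A : Struc σ) (S : Set A.carrier)
    [Finite A.carrier] (hfree : S.Nonempty)
    (B : Struc σ) [Finite B.carrier] :
    ppSet A S B = ∅ ∨ ppSet A S B = ppSet (hatStruc A S) S B :=
  stmt10_general σ A S B
end

section
/- Semi-counting equivalence is an equivalence relation on free prenex pp-formulas over a fixed signature. -/
structure PPForm (σ : Signature) where
  A : Struc σ
  S : Set A.carrier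
  fin : Finite A.carrier
  free : S.Nonempty

/-! If `φ₁ ∼ φ₂ ∼ φ₃` and `φ₃` has a solution in `B`, test all three formulas on
`Dₙ = Bⁿ ⊔ pt`. Every formula has a solution in `Dₙ` (send everything to the looped point),
so the middle formula forces `|φ₁(Dₙ)| = |φ₃(Dₙ)|`. On the other hand
`|φ(B)|ⁿ = |φ(Bⁿ)| ≤ |φ(Dₙ)|`, and, collapsing the point onto a fixed homomorphism into `Bⁿ`,
`|φ₃(Dₙ)| ≤ 2^|S₃| · |φ₃(B)|ⁿ`. Hence `|φ₁(B)|ⁿ ≤ C · |φ₃(B)|ⁿ` for all `n`, so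
`|φ₁(B)| ≤ |φ₃(B)|`, and equality follows by symmetry. -/

theorem Nat.le_of_forall_pow_le_mul_pow {u w C : ℕ} (hw : 0 < w)
    (h : ∀ n, u ^ n ≤ C * w ^ n) : u ≤ w := by
  by_contra! hwu
  have hr : (1 : ℝ) < u / w := by
    rw [one_lt_div (by positivity)]
    exact_mod_cast hwu
  obtain ⟨n, hn⟩ :=
    ((tendsto_pow_atTop_atTop_of_one_lt hr).eventually_gt_atTop (C : ℝ)).exists
  rw [div_pow, lt_div_iff₀ (by positivity)] at hn
  exact (h n).not_gt (by exact_mod_cast hn)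

section

variable {σ : Signature}

def ptStruc (σ : Signature) : Struc σ := ⟨PUnit, fun _ _ => True⟩

def sumStruc (B C : Struc σ) : Struc σ :=
  ⟨B.carrier ⊕ C.carrier, fun r t =>
    (∃ tb, t = Sum.inl ∘ tb ∧ B.rel r tb) ∨ (∃ tc, t = Sum.inr ∘ tc ∧ C.rel r tc)⟩

def powStruc (B : Struc σ) (ι : Type) : Struc σ :=
  ⟨ι → B.carrier, fun r t => ∀ i, B.rel r (fun j => t j i)⟩

instance : Finite (ptStruc σ).carrier := inferInstanceAs (Finite PUnit)

instance : Subsingleton (ptStruc σ).carrier := inferInstanceAs (Subsingleton PUnit)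

instance (B C : Struc σ) [Finite B.carrier] [Finite C.carrier] :
    Finite (sumStruc B C).carrier :=
  inferInstanceAs (Finite (B.carrier ⊕ C.carrier))

instance (B : Struc σ) (ι : Type) [Finite ι] [Finite B.carrier] :
    Finite (powStruc B ι).carrier :=
  inferInstanceAs (Finite (ι → B.carrier))

theorem IsHom.comp {A B C : Struc σ} {g : B.carrier → C.carrier} {h : A.carrier → B.carrier}
    (hg : IsHom B C g) (hh : IsHom A B h) : IsHom A C (g ∘ h) :=
  fun r t ht => hg r (h ∘ t) (hh r t ht)

theorem isHom_inl (B C : Struc σ) : IsHom B (sumStruc B C) Sum.inl :=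
  fun _ t ht => Or.inl ⟨t, rfl, ht⟩

theorem isHom_inr (B C : Struc σ) : IsHom C (sumStruc B C) Sum.inr :=
  fun _ t ht => Or.inr ⟨t, rfl, ht⟩

theorem IsHom.sumElim_ptStruc {A D : Struc σ} {h : A.carrier → (sumStruc D (ptStruc σ)).carrier}
    {h₀ : A.carrier → D.carrier} (hh : IsHom A (sumStruc D (ptStruc σ)) h)
    (hh₀ : IsHom A D h₀) : IsHom A D (fun a => Sum.elim id (fun _ => h₀ a) (h a)) := by
  intro r t ht
  rcases hh r t ht with ⟨tb, he, hrel⟩ | ⟨tc, he, -⟩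
  · convert hrel using 1
    funext i
    simp [show h (t i) = _ from congrFun he i]
  · convert hh₀ r t ht using 1
    funext i
    simp [show h (t i) = _ from congrFun he i]

variable (A : Struc σ) (S : Set A.carrier)

theorem exists_isHom_of_ppCount_pos {D : Struc σ} (h : 0 < ppCount A S D) :
    ∃ h₀ : A.carrier → D.carrier, IsHom A D h₀ := by
  obtain ⟨⟨_, h₀, hh₀, -⟩⟩ := (Nat.card_pos_iff.mp h).1
  exact ⟨h₀, hh₀⟩

theorem ppCount_ptStruc : ppCount A S (ptStruc σ) = 1 := by
  refine Nat.card_eq_one_iff_unique.mpr ⟨inferInstance, ?_⟩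
  exact ⟨⟨fun _ => PUnit.unit, fun _ => PUnit.unit, fun _ _ _ => trivial, fun _ => rfl⟩⟩

theorem ppCount_le_of_injective [Finite S] {B C : Struc σ} [Finite C.carrier]
    {g : B.carrier → C.carrier} (hg : IsHom B C g) (hinj : Function.Injective g) :
    ppCount A S B ≤ ppCount A S C := by
  refine Nat.card_le_card_of_injective (fun f => ⟨g ∘ f.1, ?_⟩) ?_
  · obtain ⟨h, hh, hs⟩ := f.2
    exact ⟨g ∘ h, hg.comp hh, fun s => congrArg g (hs s)⟩
  · intro f f' hff
    exact Subtype.ext (hinj.comp_left (congrArg Subtype.val hff))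

theorem ppCount_powStruc (B : Struc σ) (ι : Type) [Finite ι] :
    ppCount A S (powStruc B ι) = ppCount A S B ^ Nat.card ι := by
  rw [ppCount, ppCount, ← Nat.card_fun]
  refine Nat.card_congr
    { toFun := fun f i => ⟨fun s => f.1 s i, ?_⟩
      invFun := fun f => ⟨fun s i => (f i).1 s, ?_⟩
      left_inv := fun _ => rfl
      right_inv := fun _ => rfl }
  · obtain ⟨h, hh, hs⟩ := f.2
    exact ⟨fun a => h a i, fun r t ht => hh r t ht i, fun s => congrFun (hs s) i⟩
  · choose h hh hs using fun i => (f i).2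
    exact ⟨fun a i => h i a, fun r t ht i => hh i r t ht, fun s => funext fun i => hs i s⟩

variable [Finite S] (D : Struc σ) [Finite D.carrier]

theorem ppCount_le_ppCount_sumStruc_ptStruc :
    ppCount A S D ≤ ppCount A S (sumStruc D (ptStruc σ)) :=
  ppCount_le_of_injective A S (isHom_inl _ _) Sum.inl_injective

theorem ppCount_sumStruc_ptStruc_pos : 0 < ppCount A S (sumStruc D (ptStruc σ)) :=
  (ppCount_ptStruc A S).ge.trans <|
    ppCount_le_of_injective A S (isHom_inr _ _) Sum.inr_injective

theorem ppCount_sumStruc_ptStruc_le {h₀ : A.carrier → D.carrier} (hh₀ : IsHom A D h₀) :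
    ppCount A S (sumStruc D (ptStruc σ)) ≤ ppCount A S D * 2 ^ Nat.card S := by
  have hBool : Nat.card Bool = 2 := by simp
  rw [ppCount, ppCount, ← hBool, ← Nat.card_fun, ← Nat.card_prod]
  refine Nat.card_le_card_of_injective
    (fun f => (⟨fun s => Sum.elim id (fun _ => h₀ s) (f.1 s), ?_⟩, fun s => (f.1 s).isRight)) ?_
  · obtain ⟨h, hh, hs⟩ := f.2
    exact ⟨_, hh.sumElim_ptStruc hh₀, fun s => by simp only [hs]⟩
  · intro f f' hff
    refine Subtype.ext (funext fun s => ?_)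
    have hval := congrFun (congrArg (fun p => p.1.1) hff) s
    have hright := congrFun (congrArg Prod.snd hff) s
    simp only at hval hright
    change (f.1 s : D.carrier ⊕ (ptStruc σ).carrier) = f'.1 s
    generalize f.1 s = x at hval hright ⊢
    generalize f'.1 s = y at hval hright ⊢
    rcases x with d | u <;> rcases y with d' | u'
    · exact congrArg Sum.inl hval
    · simp at hright
    · simp at hright
    · exact congrArg Sum.inr (Subsingleton.elim u u')

end

section

variable {σ : Signature} {A₁ A₂ A₃ : Struc σ} {S₁ : Set A₁.carrier} {S₂ : Set A₂.carrier}
  {S₃ : Set A₃.carrier}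

theorem SemiCountEquiv.refl (A : Struc σ) (S : Set A.carrier) : SemiCountEquiv A S A S :=
  fun _ _ _ _ => rfl

theorem SemiCountEquiv.symm (h : SemiCountEquiv A₁ S₁ A₂ S₂) : SemiCountEquiv A₂ S₂ A₁ S₁ :=
  fun B hB h₂ h₁ => (h B hB h₁ h₂).symm

theorem SemiCountEquiv.ppCount_le [Finite S₁] [Finite S₂] [Finite S₃]
    (h₁ : SemiCountEquiv A₁ S₁ A₂ S₂) (h₃ : SemiCountEquiv A₃ S₃ A₂ S₂) {B : Struc σ}
    [Finite B.carrier] (hpos : 0 < ppCount A₃ S₃ B) : ppCount A₁ S₁ B ≤ ppCount A₃ S₃ B := by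
  refine Nat.le_of_forall_pow_le_mul_pow hpos (C := 2 ^ Nat.card S₃) fun n => ?_
  let Bn := powStruc B (Fin n)
  let D := sumStruc Bn (ptStruc σ)
  have hpowStruc {A : Struc σ} (S : Set A.carrier) : ppCount A S Bn = ppCount A S B ^ n := by
    rw [ppCount_powStruc, Nat.card_fin]
  obtain ⟨h₀, hh₀⟩ := exists_isHom_of_ppCount_pos A₃ S₃ (D := Bn) <| by
    rw [hpowStruc]; positivity
  calc ppCount A₁ S₁ B ^ n = ppCount A₁ S₁ Bn := (hpowStruc S₁).symm
    _ ≤ ppCount A₁ S₁ D := ppCount_le_ppCount_sumStruc_ptStruc A₁ S₁ Bn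
    _ = ppCount A₂ S₂ D := h₁ D inferInstance (ppCount_sumStruc_ptStruc_pos ..)
        (ppCount_sumStruc_ptStruc_pos ..)
    _ = ppCount A₃ S₃ D := (h₃ D inferInstance (ppCount_sumStruc_ptStruc_pos ..)
        (ppCount_sumStruc_ptStruc_pos ..)).symm
    _ ≤ ppCount A₃ S₃ Bn * 2 ^ Nat.card S₃ := ppCount_sumStruc_ptStruc_le A₃ S₃ Bn hh₀
    _ = 2 ^ Nat.card S₃ * ppCount A₃ S₃ B ^ n := by rw [hpowStruc, mul_comm]

theorem SemiCountEquiv.trans [Finite S₁] [Finite S₂] [Finite S₃]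
    (h₁₂ : SemiCountEquiv A₁ S₁ A₂ S₂) (h₂₃ : SemiCountEquiv A₂ S₂ A₃ S₃) :
    SemiCountEquiv A₁ S₁ A₃ S₃ := fun _ _ hpos₁ hpos₃ =>
  le_antisymm (h₁₂.ppCount_le h₂₃.symm hpos₃) (h₂₃.symm.ppCount_le h₁₂ hpos₁)

end

/-- Semi-counting equivalence is an equivalence relation on free prenex
pp-formulas over a fixed signature. -/
theorem stmt12 (σ : Signature) :
    Equivalence (fun φ ψ : PPForm σ => SemiCountEquiv φ.A φ.S ψ.A ψ.S) := by
  refine ⟨fun φ => .refl φ.A φ.S, .symm, fun {φ ψ χ} h₁₂ h₂₃ => ?_⟩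
  have := φ.fin; have := ψ.fin; have := χ.fin
  exact h₁₂.trans h₂₃
end
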